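/- arXiv:2301.03230 — 2 statements merged into one kernel-verified Lean document; each statement's English description precedes it below -/
import Mathlib

section
/- For all g ≥ 1 and q ≥ 1, the domination number of G_q(g) equals ((q²+2q−1)/(q+3)) · ((q+1)(q+2)/2)^{g−1} + 2(q+2)/(q+3). -/
/-!
In `G ⊛ K_q` each edge `uv` of `G` spans, together with its `q` new vertices, a clique `K_{q+2}`.
Mapping every new vertex to an endpoint of its edge turns a dominating set of `G ⊛ K_q` into a
vertex cover of `G`, and a vertex cover of `G` dominates `G ⊛ K_q`, so `γ(G ⊛ K_q) = τ(G)`.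
An independent set of `G ⊛ K_q` meets each edge clique at most once; choosing one incident edge
for every old vertex makes it inject into `E(G)`, and one new vertex per edge attains this, so
`α(G ⊛ K_q) = |E(G)|` and `τ(G ⊛ K_q) = |V(G ⊛ K_q)| - |E(G)|`. By the handshake lemma
`|E(G_q(g))| = ((q+1)(q+2)/2)^(g+1)`; together with `γ(G_q(1)) = τ(K_{q+2}) = q + 1` this gives
the closed form.
-/

/-- Edge corona product `G ⊛ K_q`: keep `G`, and for each edge of `G` add a fresh
copy of the complete graph on `q` vertices, joining all its vertices to both
endpoints of the edge. -/
def edgeCorona {V : Type} (G : SimpleGraph V) (q : ℕ) :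
    SimpleGraph (V ⊕ (G.edgeSet × Fin q)) where
  Adj := fun x y => match x, y with
    | Sum.inl u, Sum.inl v => G.Adj u v
    | Sum.inl u, Sum.inr p => u ∈ (p.1 : Sym2 V)
    | Sum.inr p, Sum.inl v => v ∈ (p.1 : Sym2 V)
    | Sum.inr p, Sum.inr r => p.1 = r.1 ∧ p.2 ≠ r.2
  symm := by
    refine ⟨?_⟩
    rintro (u | p) (v | r) h
    · exact G.adj_symm h
    · exact h
    · exact h
    · exact ⟨h.1.symm, h.2.symm⟩
  loopless := by
    refine ⟨?_⟩
    rintro (u | p) h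
    · exact G.irrefl h
    · exact h.2 rfl

/-- The simplicial network `G_q(g)` together with its vertex type:
`G_q(0) = K_{q+2}` and `G_q(g+1) = G_q(g) ⊛ K_q`. -/
def Gaux (q : ℕ) : ℕ → Σ V : Type, SimpleGraph V
  | 0 => ⟨Fin (q + 2), ⊤⟩
  | g + 1 => ⟨_, edgeCorona (Gaux q g).2 q⟩

abbrev GVert (q g : ℕ) : Type := (Gaux q g).1

abbrev Gnet (q g : ℕ) : SimpleGraph (GVert q g) := (Gaux q g).2

/-- The `q+2` hub nodes of `G_q(g)`: the vertices present from iteration `0`. -/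
def hub (q : ℕ) : (g : ℕ) → Fin (q + 2) → GVert q g
  | 0 => id
  | g + 1 => fun k => Sum.inl (hub q g k)

/-- `D` is a dominating set: every vertex not in `D` has a neighbor in `D`. -/
def IsDominatingSet {V : Type} (G : SimpleGraph V) (D : Finset V) : Prop :=
  ∀ v ∉ D, ∃ u ∈ D, G.Adj u v

/-- The domination number: the least cardinality of a dominating set. -/
noncomputable def domNum {V : Type} (G : SimpleGraph V) : ℕ :=
  sInf {n | ∃ D : Finset V, IsDominatingSet G D ∧ D.card = n}


lemma Set.ncard_eq_ncard_preimage_inl_add_ncard_preimage_inr {α β : Type*} [Finite α] [Finite β]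
    (s : Set (α ⊕ β)) : s.ncard = (Sum.inl ⁻¹' s).ncard + (Sum.inr ⁻¹' s).ncard := by
  conv_lhs => rw [← Set.image_preimage_inl_union_image_preimage_inr s]
  rw [Set.ncard_union_eq Set.disjoint_image_inl_image_inr,
    Set.ncard_image_of_injective _ Sum.inl_injective,
    Set.ncard_image_of_injective _ Sum.inr_injective]

namespace SimpleGraph

variable {V : Type*} {G : SimpleGraph V}

lemma sum_natCard_neighborSet [Fintype V] (G : SimpleGraph V) :
    ∑ v, Nat.card (G.neighborSet v) = 2 * Nat.card G.edgeSet := by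
  classical
  convert G.sum_degrees_eq_twice_card_edges using 3 with v
  · rw [Nat.card_eq_fintype_card, card_neighborSet_eq_degree]
  · rw [edgeFinset_card, Nat.card_eq_fintype_card]

theorem vertexCoverNum_add_indepNum [Finite V] :
    G.vertexCoverNum + G.indepNum = Nat.card V := by
  classical
  have := Fintype.ofFinite V
  apply le_antisymm
  · obtain ⟨t, ht⟩ := G.exists_isNIndepSet_indepNum
    have hcover : G.IsVertexCover (↑t)ᶜ := isVertexCover_compl.mpr ht.isIndepSet
    grw [hcover.vertexCoverNum_le, ← Finset.coe_compl, Set.encard_coe_eq_coe_finsetCard,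
      Finset.card_compl, ← ht.card_eq, Nat.card_eq_fintype_card]
    have : t.card ≤ Fintype.card V := Finset.card_le_univ t
    norm_cast
    omega
  · obtain ⟨s, hs, hcover⟩ := G.vertexCoverNum_exists
    have hindep : G.IsIndepSet (sᶜ.toFinset : Set V) := by
      simpa using isIndepSet_compl_iff_isVertexCover.mpr hcover
    have := hindep.card_le_indepNum
    rw [← hs, ← s.toFinite.cast_ncard_eq, ← s.ncard_add_ncard_compl,
      Set.ncard_eq_toFinset_card' sᶜ]
    norm_cast
    omega

end SimpleGraph

lemma domNum_le_card {V : Type} {G : SimpleGraph V} {D : Finset V} (hD : IsDominatingSet G D) :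
    domNum G ≤ D.card :=
  Nat.sInf_le ⟨D, hD, rfl⟩

lemma exists_isDominatingSet_card_eq_domNum {V : Type} [Finite V] (G : SimpleGraph V) :
    ∃ D : Finset V, IsDominatingSet G D ∧ D.card = domNum G := by
  have := Fintype.ofFinite V
  exact Nat.sInf_mem (s := {n | ∃ D : Finset V, IsDominatingSet G D ∧ D.card = n})
    ⟨_, Finset.univ, fun v hv => absurd (Finset.mem_univ v) hv, rfl⟩

open SimpleGraph

section EdgeCorona

variable {V : Type} {G : SimpleGraph V} {q : ℕ}

@[simp] lemma edgeCorona_adj_inl_inl {u v : V} :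
    (edgeCorona G q).Adj (.inl u) (.inl v) ↔ G.Adj u v := Iff.rfl

@[simp] lemma edgeCorona_adj_inl_inr {u : V} {p : G.edgeSet × Fin q} :
    (edgeCorona G q).Adj (.inl u) (.inr p) ↔ u ∈ (p.1 : Sym2 V) := Iff.rfl

@[simp] lemma edgeCorona_adj_inr_inl {p : G.edgeSet × Fin q} {v : V} :
    (edgeCorona G q).Adj (.inr p) (.inl v) ↔ v ∈ (p.1 : Sym2 V) := Iff.rfl

@[simp] lemma edgeCorona_adj_inr_inr {p r : G.edgeSet × Fin q} :
    (edgeCorona G q).Adj (.inr p) (.inr r) ↔ p.1 = r.1 ∧ p.2 ≠ r.2 := Iff.rfl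

lemma edgeCorona_adj_of_elim_eq {σ : V → G.edgeSet} (hσ : ∀ v, v ∈ (σ v : Sym2 V))
    {x y : V ⊕ (G.edgeSet × Fin q)} (hne : x ≠ y)
    (h : Sum.elim σ Prod.fst x = Sum.elim σ Prod.fst y) : (edgeCorona G q).Adj x y := by
  rcases x with u | ⟨e, i⟩ <;> rcases y with v | ⟨f, j⟩ <;>
    simp only [Sum.elim_inl, Sum.elim_inr] at h
  · have huv : u ≠ v := fun huv => hne (congrArg _ huv)
    have : (σ u : Sym2 V) = s(u, v) := (Sym2.mem_and_mem_iff huv).mp ⟨hσ u, h ▸ hσ v⟩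
    exact edgeCorona_adj_inl_inl.mpr (G.mem_edgeSet.mp (this ▸ (σ u).2))
  · simpa [← h] using hσ u
  · simpa [h] using hσ v
  · simp_all

theorem indepNum_edgeCorona [Finite V] (hG : ∀ v, ∃ w, G.Adj v w) (hq : 0 < q) :
    (edgeCorona G q).indepNum = Nat.card G.edgeSet := by
  classical
  choose w hw using hG
  apply le_antisymm
  · obtain ⟨t, ht⟩ := (edgeCorona G q).exists_isNIndepSet_indepNum
    rw [← ht.card_eq, ← Set.ncard_coe_finset, ← Set.ncard_univ]
    refine Set.ncard_le_ncard_of_injOn (Sum.elim (fun v => ⟨s(v, w v), hw v⟩) Prod.fst)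
      (fun _ _ => trivial) fun x hx y hy h => ?_
    by_contra hne
    exact ht.isIndepSet hx hy hne
      (edgeCorona_adj_of_elim_eq (fun v => Sym2.mem_mk_left v (w v)) hne h)
  · have := Fintype.ofFinite G.edgeSet
    set I := Finset.univ.image fun e => (Sum.inr (e, ⟨0, hq⟩) : V ⊕ (G.edgeSet × Fin q))
    have hI : (edgeCorona G q).IsIndepSet I := by
      simp only [I, Finset.coe_image, Finset.coe_univ, Set.image_univ]
      rintro _ ⟨e, rfl⟩ _ ⟨f, rfl⟩ - ⟨-, hne⟩
      exact hne rfl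
    have hcard : I.card = Nat.card G.edgeSet := by
      rw [Finset.card_image_of_injective _ fun e f h => by simpa using h, Finset.card_univ,
        Nat.card_eq_fintype_card]
    exact hcard ▸ hI.card_le_indepNum


theorem domNum_edgeCorona [Finite V] (hG : ∀ v, ∃ w, G.Adj v w) (hq : 0 < q) :
    (domNum (edgeCorona G q) : ℕ∞) = G.vertexCoverNum := by
  classical
  have := Fintype.ofFinite V
  apply le_antisymm
  · obtain ⟨s, hs, hcover⟩ := G.vertexCoverNum_exists
    have hdom : IsDominatingSet (edgeCorona G q) (s.toFinset.image Sum.inl) := by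
      rintro (u | ⟨⟨e, he⟩, i⟩) hx
      · obtain ⟨w, hw⟩ := hG u
        have hws : w ∈ s := (hcover hw).resolve_left (by simpa using hx)
        exact ⟨.inl w, by simpa using hws, hw.symm⟩
      · induction e using Sym2.ind with
        | _ a b =>
          rcases hcover he with ha | hb
          · exact ⟨.inl a, by simpa using ha, by simp⟩
          · exact ⟨.inl b, by simpa using hb, by simp⟩
    rw [← hs, Set.encard_eq_coe_toFinset_card]
    exact_mod_cast (domNum_le_card hdom).trans Finset.card_image_le
  · obtain ⟨D, hD, hcard⟩ := exists_isDominatingSet_card_eq_domNum (edgeCorona G q)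
    set f : V ⊕ (G.edgeSet × Fin q) → V := Sum.elim id fun p => (p.1 : Sym2 V).out.1
    have hcover : G.IsVertexCover (f '' D) := by
      intro u v huv
      -- `(uv, 0)` or a vertex dominating it is in `D`, and both lie in the clique over `uv`
      obtain ⟨x, hx, hfx⟩ : ∃ x ∈ D, f x ∈ s(u, v) := by
        by_cases h0 : .inr (⟨s(u, v), huv⟩, ⟨0, hq⟩) ∈ D
        · exact ⟨_, h0, Sym2.out_fst_mem _⟩
        obtain ⟨x, hx, hadj⟩ := hD _ h0
        rcases x with a | ⟨e, j⟩
        · exact ⟨_, hx, hadj⟩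
        · obtain rfl : e = ⟨s(u, v), huv⟩ := (edgeCorona_adj_inr_inr.mp hadj).1
          exact ⟨_, hx, Sym2.out_fst_mem _⟩
      rcases Sym2.mem_iff.mp hfx with rfl | rfl
      · exact .inl ⟨x, hx, rfl⟩
      · exact .inr ⟨x, hx, rfl⟩
    calc G.vertexCoverNum ≤ (f '' D).encard := hcover.vertexCoverNum_le
      _ ≤ (D : Set (V ⊕ (G.edgeSet × Fin q))).encard := Set.encard_image_le f _
      _ = domNum (edgeCorona G q) := by rw [Set.encard_coe_eq_coe_finsetCard, hcard]


lemma natCard_neighborSet_edgeCorona_inl [Finite V] (u : V) :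
    Nat.card ((edgeCorona G q).neighborSet (.inl u)) = (q + 1) * Nat.card (G.neighborSet u) := by
  classical
  have hinr : Sum.inr ⁻¹' (edgeCorona G q).neighborSet (.inl u) =
      (Subtype.val ⁻¹' G.incidenceSet u) ×ˢ Set.univ := by
    ext ⟨⟨e, he⟩, i⟩
    simp [incidenceSet]
  have hinc : (Subtype.val ⁻¹' G.incidenceSet u : Set G.edgeSet).ncard =
      Nat.card (G.neighborSet u) := by
    rw [Set.ncard_preimage_of_injective_subset_range Subtype.val_injective
      (by simpa using G.incidenceSet_subset u), ← Nat.card_coe_set_eq]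
    exact Nat.card_congr (G.incidenceSetEquivNeighborSet u)
  have hinl : (Sum.inl ⁻¹' (edgeCorona G q).neighborSet (.inl u)).ncard =
      Nat.card (G.neighborSet u) :=
    (Nat.card_coe_set_eq _).symm
  rw [Nat.card_coe_set_eq, Set.ncard_eq_ncard_preimage_inl_add_ncard_preimage_inr, hinl, hinr,
    Set.ncard_prod, hinc, Set.ncard_univ, Nat.card_fin]
  ring

lemma natCard_neighborSet_edgeCorona_inr [Finite V] (p : G.edgeSet × Fin q) :
    Nat.card ((edgeCorona G q).neighborSet (.inr p)) = q + 1 := by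
  obtain ⟨⟨e, he⟩, i⟩ := p
  have hinl : (Sum.inl ⁻¹' (edgeCorona G q).neighborSet (.inr (⟨e, he⟩, i))).ncard = 2 := by
    induction e using Sym2.ind with
    | _ a b =>
      have : Sum.inl ⁻¹' (edgeCorona G q).neighborSet (.inr (⟨s(a, b), he⟩, i)) =
          {a, b} := by
        ext v
        simp [eq_comm]
      rw [this, Set.ncard_pair (G.ne_of_adj he)]
  have hinr : Sum.inr ⁻¹' (edgeCorona G q).neighborSet (.inr (⟨e, he⟩, i)) =
      {(⟨e, he⟩ : G.edgeSet)} ×ˢ {i}ᶜ := by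
    ext ⟨f, j⟩
    simp [eq_comm]
  rw [Nat.card_coe_set_eq, Set.ncard_eq_ncard_preimage_inl_add_ncard_preimage_inr, hinl, hinr,
    Set.ncard_prod, Set.ncard_singleton, Set.ncard_compl, Set.ncard_singleton, Nat.card_fin]
  have := i.pos
  omega

theorem two_mul_natCard_edgeSet_edgeCorona [Finite V] :
    2 * Nat.card (edgeCorona G q).edgeSet = (q + 1) * (q + 2) * Nat.card G.edgeSet := by
  classical
  have := Fintype.ofFinite V
  rw [← sum_natCard_neighborSet, Fintype.sum_sum_type]
  simp only [natCard_neighborSet_edgeCorona_inl, natCard_neighborSet_edgeCorona_inr,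
    ← Finset.mul_sum, sum_natCard_neighborSet, Finset.sum_const, Finset.card_univ,
    smul_eq_mul, ← Nat.card_eq_fintype_card, Nat.card_prod, Nat.card_fin]
  ring

end EdgeCorona

section Gnet

instance finite_GVert (q : ℕ) : ∀ g, Finite (GVert q g)
  | 0 => inferInstanceAs (Finite (Fin (q + 2)))
  | g + 1 =>
    have := finite_GVert q g
    inferInstanceAs (Finite (GVert q g ⊕ ((Gnet q g).edgeSet × Fin q)))

lemma exists_adj_Gnet (q : ℕ) : ∀ g (v : GVert q g), ∃ w, (Gnet q g).Adj v w
  | 0, v => by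
    obtain ⟨w, hw⟩ := exists_ne (α := Fin (q + 2)) v
    exact ⟨w, hw.symm⟩
  | g + 1, .inl u => by
    obtain ⟨w, hw⟩ := exists_adj_Gnet q g u
    exact ⟨.inl w, hw⟩
  | _ + 1, .inr p => ⟨.inl (p.1 : Sym2 _).out.1, Sym2.out_fst_mem _⟩

lemma natCard_GVert_succ (q g : ℕ) :
    Nat.card (GVert q (g + 1)) = Nat.card (GVert q g) + q * Nat.card (Gnet q g).edgeSet := by
  change Nat.card (GVert q g ⊕ ((Gnet q g).edgeSet × Fin q)) = _
  rw [Nat.card_sum, Nat.card_prod, Nat.card_fin, mul_comm]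

lemma natCard_edgeSet_Gnet (q g : ℕ) :
    (Nat.card (Gnet q g).edgeSet : ℚ) = (((q : ℚ) + 1) * ((q : ℚ) + 2) / 2) ^ (g + 1) := by
  induction g with
  | zero =>
    classical
    change (Nat.card (⊤ : SimpleGraph (Fin (q + 2))).edgeSet : ℚ) = _
    rw [Nat.card_eq_fintype_card, ← edgeFinset_card,
      card_edgeFinset_top_eq_card_choose_two, Fintype.card_fin, Nat.cast_choose_two]
    push_cast
    ring
  | succ g ih =>
    have h : (2 * Nat.card (Gnet q (g + 1)).edgeSet : ℚ) =
        (q + 1) * (q + 2) * Nat.card (Gnet q g).edgeSet := by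
      exact_mod_cast two_mul_natCard_edgeSet_edgeCorona (G := Gnet q g) (q := q)
    rw [ih] at h
    rw [pow_succ]
    linarith

lemma natCard_GVert (q g : ℕ) :
    (Nat.card (GVert q g) : ℚ) = ((q : ℚ) + 2) + ((q : ℚ) + 1) * ((q : ℚ) + 2) *
      ((((q : ℚ) + 1) * ((q : ℚ) + 2) / 2) ^ g - 1) / ((q : ℚ) + 3) := by
  induction g with
  | zero => simp [GVert, Gaux]
  | succ g ih =>
    rw [natCard_GVert_succ, Nat.cast_add, Nat.cast_mul, ih, natCard_edgeSet_Gnet]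
    field_simp
    ring

lemma domNum_Gnet_one (q : ℕ) (hq : 0 < q) : domNum (Gnet q 1) = q + 1 := by
  have h := domNum_edgeCorona (exists_adj_Gnet q 0) hq
  change _ = (⊤ : SimpleGraph (Fin (q + 2))).vertexCoverNum at h
  rw [vertexCoverNum_top, ENat.card_eq_coe_fintype_card, Fintype.card_fin] at h
  exact_mod_cast h

lemma domNum_Gnet_add_two (q g : ℕ) (hq : 0 < q) :
    domNum (Gnet q (g + 2)) + Nat.card (Gnet q g).edgeSet =
      Nat.card (GVert q g) + q * Nat.card (Gnet q g).edgeSet := by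
  have hdom := domNum_edgeCorona (exists_adj_Gnet q (g + 1)) hq
  have hindep : (Gnet q (g + 1)).indepNum = Nat.card (Gnet q g).edgeSet :=
    indepNum_edgeCorona (exists_adj_Gnet q g) hq
  have hsum := (Gnet q (g + 1)).vertexCoverNum_add_indepNum
  rw [← hdom, hindep, natCard_GVert_succ] at hsum
  exact_mod_cast hsum

end Gnet

/-- For `g ≥ 1`, the domination number of `G_q(g)` equals
`((q²+2q−1)/(q+3)) · ((q+1)(q+2)/2)^{g−1} + 2(q+2)/(q+3)`. -/
theorem domNum_Gnet (q g : ℕ) (hq : 1 ≤ q) (hg : 1 ≤ g) :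
    (domNum (Gnet q g) : ℚ) =
      (((q : ℚ) ^ 2 + 2 * q - 1) / ((q : ℚ) + 3)) *
          (((q : ℚ) + 1) * ((q : ℚ) + 2) / 2) ^ (g - 1)
        + 2 * ((q : ℚ) + 2) / ((q : ℚ) + 3) := by
  obtain ⟨k, rfl⟩ : ∃ k, g = k + 1 := ⟨g - 1, by omega⟩
  rw [Nat.add_sub_cancel]
  cases k with
  | zero =>
    rw [domNum_Gnet_one q hq]
    push_cast
    field_simp
    ring
  | succ k =>
    have h : (domNum (Gnet q (k + 2)) : ℚ) + Nat.card (Gnet q k).edgeSet =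
        Nat.card (GVert q k) + q * Nat.card (Gnet q k).edgeSet := by
      exact_mod_cast domNum_Gnet_add_two q k hq
    rw [natCard_GVert, natCard_edgeSet_Gnet] at h
    rw [eq_sub_of_add_eq h]
    field_simp
    ring
end

section
/- For all g ≥ 0 and q ≥ 1, the number of acyclic orientations of G_q(g) equals 2 · ((q+2)!/2)^{E(g,q)}, where E(g,q) = (2/(q(q+3))) · ((q+1)(q+2)/2)^{g+1} − 2/(q(q+3)). -/
/-- The exponent `E(g,q) = (2/(q(q+3))) · ((q+1)(q+2)/2)^{g+1} − 2/(q(q+3))`,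
a natural number (the division is exact). -/
def expE (q g : ℕ) : ℕ :=
  (2 * (((q + 1) * (q + 2) / 2) ^ (g + 1) - 1)) / (q * (q + 3))

/-- An acyclic orientation of a graph `G`: a choice of direction for every edge
such that the resulting directed graph has no directed cycle. -/
structure AcyclicOrientation {V : Type} (G : SimpleGraph V) where
  /-- the chosen direction relation -/
  dir : V → V → Prop
  dir_adj : ∀ u v, dir u v → G.Adj u v
  adj_dir : ∀ u v, G.Adj u v → dir u v ∨ dir v u
  asymm : ∀ u v, dir u v → ¬ dir v u
  acyclic : Irreflexive (Relation.TransGen dir)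

/-! An acyclic orientation of the edge corona `G ⊛ K_q` amounts to an acyclic orientation of `G`
together with, for every edge `e` of `G`, an acyclic orientation of the clique `K_{q+2}` formed by
`e` and its `q` new vertices that orients `e` the same way. Indeed every edge of the corona lies in
exactly one of these cliques, and a directed path entering such a clique through an endpoint of `e`
can only leave it through the other endpoint, so by transitivity inside the clique it can be
short-cut along `e`; hence a directed cycle in the corona yields one in `G` or in a single clique.
Acyclic orientations of `K_n` are the `n!` linear orders, half of which orient a given edge a given
way, so `a(G ⊛ K_q) = a(G) · ((q+2)!/2)^{|E(G)|}`. As `G_q(g)` has `C(q+2,2)^{g+1}` edges and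
`E(g,q) = ∑_{k ≤ g} C(q+2,2)^k`, induction on `g` gives the formula. -/

open Relation

namespace AcyclicOrientation

variable {V W : Type} {G : SimpleGraph V} {H : SimpleGraph W} {u v w x y : V}

theorem ext {D₁ D₂ : AcyclicOrientation G} (h : ∀ u v, D₁.dir u v ↔ D₂.dir u v) :
    D₁ = D₂ := by
  obtain ⟨d₁, _, _, _, _⟩ := D₁
  obtain ⟨d₂, _, _, _, _⟩ := D₂
  obtain rfl : d₁ = d₂ := funext₂ fun u v => propext (h u v)
  rfl

instance [Finite V] : Finite (AcyclicOrientation G) :=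
  Finite.of_injective dir fun _ _ h => ext fun u v => by rw [h]

theorem ne_of_dir (D : AcyclicOrientation G) (h : D.dir u v) : u ≠ v :=
  (D.dir_adj u v h).ne

theorem not_dir_iff (D : AcyclicOrientation G) (h : G.Adj u v) : ¬ D.dir u v ↔ D.dir v u :=
  ⟨(D.adj_dir u v h).resolve_left, fun hvu huv => D.asymm u v huv hvu⟩

theorem dir_trans_of_adj (D : AcyclicOrientation G) (h : G.Adj u w) (huv : D.dir u v)
    (hvw : D.dir v w) : D.dir u w :=
  (D.adj_dir u w h).resolve_right fun hwu =>
    D.acyclic u (((TransGen.single huv).tail hvw).tail hwu)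

def reverse (D : AcyclicOrientation G) : AcyclicOrientation G where
  dir u v := D.dir v u
  dir_adj u v h := (D.dir_adj v u h).symm
  adj_dir u v h := (D.adj_dir u v h).symm
  asymm u v h := D.asymm v u h
  acyclic u h := D.acyclic u (transGen_swap.mp h)

theorem reverse_involutive : Function.Involutive (reverse (G := G)) := fun _ => rfl

theorem two_mul_card_dir [Finite V] (h : G.Adj x y) :
    2 * Nat.card {D : AcyclicOrientation G // D.dir x y} = Nat.card (AcyclicOrientation G) := by
  classical
  have hrev :
      {D : AcyclicOrientation G // D.dir x y} ≃ {D : AcyclicOrientation G // ¬ D.dir x y} :=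
    reverse_involutive.toPerm.subtypeEquiv fun D => (D.reverse.not_dir_iff h).symm
  rw [two_mul]
  nth_rw 2 [Nat.card_congr hrev]
  rw [← Nat.card_sum]
  exact Nat.card_congr (Equiv.sumCompl _)

theorem card_subtype_dir_iff [Finite V] (h : G.Adj x y) (P : Prop) :
    Nat.card {D : AcyclicOrientation G // D.dir x y ↔ P} =
      Nat.card (AcyclicOrientation G) / 2 := by
  rw [← two_mul_card_dir h, Nat.mul_div_cancel_left _ two_pos]
  by_cases hP : P
  · simp only [hP, iff_true]
  · refine Nat.card_congr (reverse_involutive.toPerm.subtypeEquiv fun D => ?_)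
    simp only [hP, iff_false]
    exact D.not_dir_iff h

def comap (f : G ↪g H) (D : AcyclicOrientation H) : AcyclicOrientation G where
  dir u v := D.dir (f u) (f v)
  dir_adj _ _ h := f.map_adj_iff.mp (D.dir_adj _ _ h)
  adj_dir _ _ h := D.adj_dir _ _ (f.map_adj_iff.mpr h)
  asymm _ _ h := D.asymm _ _ h
  acyclic u h := D.acyclic (f u) (TransGen.lift f (fun _ _ h => h) u u h)

theorem top_dir_trans (C : AcyclicOrientation (⊤ : SimpleGraph V)) (huv : C.dir u v)
    (hvw : C.dir v w) : C.dir u w :=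
  C.dir_trans_of_adj (fun huw => C.asymm u v huv (huw ▸ hvw)) huv hvw

section Complete

variable [Fintype V]

noncomputable def rank (C : AcyclicOrientation (⊤ : SimpleGraph V)) (v : V) : ℕ :=
  {x | C.dir x v}.ncard

theorem rank_lt_rank (C : AcyclicOrientation (⊤ : SimpleGraph V)) (h : C.dir u v) :
    C.rank u < C.rank v :=
  Set.ncard_lt_ncard ⟨fun _ hx => C.top_dir_trans hx h,
    fun hsub => C.ne_of_dir (hsub h : C.dir u u) rfl⟩

theorem rank_lt_card (C : AcyclicOrientation (⊤ : SimpleGraph V)) (v : V) :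
    C.rank v < Fintype.card V := by
  rw [← Nat.card_eq_fintype_card, ← Set.ncard_univ]
  exact Set.ncard_lt_ncard ⟨Set.subset_univ _, fun hsub => C.ne_of_dir (hsub trivial) rfl⟩

theorem dir_iff_rank_lt (C : AcyclicOrientation (⊤ : SimpleGraph V)) :
    C.dir u v ↔ C.rank u < C.rank v := by
  refine ⟨C.rank_lt_rank, fun hlt => ?_⟩
  have huv : u ≠ v := fun h => (h ▸ hlt).false
  by_contra hvu
  exact (C.rank_lt_rank ((C.not_dir_iff huv).mp hvu)).asymm hlt

def ofEquiv (σ : V ≃ Fin (Fintype.card V)) : AcyclicOrientation (⊤ : SimpleGraph V) where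
  dir u v := σ u < σ v
  dir_adj _ _ h := fun huv => (huv ▸ h).false
  adj_dir _ _ h := lt_or_gt_of_ne (σ.injective.ne h)
  asymm _ _ h := h.asymm
  acyclic u h := lt_irrefl (σ u)
    (transGen_minimal (r := (· < ·)) le_rfl _ _ (TransGen.lift σ (fun _ _ h => h) u u h))

theorem rank_ofEquiv (σ : V ≃ Fin (Fintype.card V)) (v : V) : (ofEquiv σ).rank v = σ v := by
  rw [rank, ← Nat.card_coe_set_eq, ← Fintype.card_fin_lt_of_le (σ v).isLt.le,
    ← Nat.card_eq_fintype_card]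
  exact Nat.card_congr (σ.subtypeEquiv fun _ => Iff.rfl)

noncomputable def toEquiv (C : AcyclicOrientation (⊤ : SimpleGraph V)) :
    V ≃ Fin (Fintype.card V) :=
  Equiv.ofBijective (fun v => ⟨C.rank v, C.rank_lt_card v⟩) <| by
    refine (Fintype.bijective_iff_injective_and_card _).mpr
      ⟨fun u v h => ?_, (Fintype.card_fin _).symm⟩
    by_contra huv
    rcases C.adj_dir u v huv with hd | hd <;>
      [exact (C.rank_lt_rank hd).ne (Fin.mk.inj h); exact (C.rank_lt_rank hd).ne' (Fin.mk.inj h)]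

noncomputable def equivRankings :
    AcyclicOrientation (⊤ : SimpleGraph V) ≃ (V ≃ Fin (Fintype.card V)) where
  toFun := toEquiv
  invFun := ofEquiv
  left_inv C := ext fun _ _ => C.dir_iff_rank_lt.symm
  right_inv σ := Equiv.ext fun v => Fin.ext (rank_ofEquiv σ v)

theorem card_top :
    Nat.card (AcyclicOrientation (⊤ : SimpleGraph V)) = (Fintype.card V).factorial := by
  classical
  rw [Nat.card_congr equivRankings, Nat.card_eq_fintype_card,
    Fintype.card_equiv (Fintype.equivFin V)]

end Complete

end AcyclicOrientation

section EdgeCorona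

variable {V : Type} {G : SimpleGraph V} {q : ℕ}

noncomputable def edgeEnd (e : G.edgeSet) (t : Bool) : V :=
  if t then (e : Sym2 V).out.2 else (e : Sym2 V).out.1

theorem mk_edgeEnd (e : G.edgeSet) : s(edgeEnd e false, edgeEnd e true) = e :=
  Quot.out_eq _

theorem mem_edge_iff_exists_edgeEnd {e : G.edgeSet} {u : V} :
    u ∈ (e : Sym2 V) ↔ ∃ t, edgeEnd e t = u := by
  rw [← mk_edgeEnd e, Sym2.mem_iff, Bool.exists_bool]
  exact or_congr eq_comm eq_comm

theorem adj_edgeEnd_iff (e : G.edgeSet) {t s : Bool} :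
    G.Adj (edgeEnd e t) (edgeEnd e s) ↔ t ≠ s := by
  have hadj : G.Adj (edgeEnd e false) (edgeEnd e true) := by
    rw [← SimpleGraph.mem_edgeSet, mk_edgeEnd]; exact e.2
  cases t <;> cases s <;> simp [hadj, hadj.symm]

theorem edgeEnd_injective (e : G.edgeSet) : Function.Injective (edgeEnd e) := fun t s h => by
  by_contra hts
  exact ((adj_edgeEnd_iff e).mpr hts).ne h

theorem mk_edgeEnd_of_ne (e : G.edgeSet) {t s : Bool} (h : t ≠ s) :
    s(edgeEnd e t, edgeEnd e s) = e := by
  cases t <;> cases s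
  · exact absurd rfl h
  · exact mk_edgeEnd e
  · exact Sym2.eq_swap.trans (mk_edgeEnd e)
  · exact absurd rfl h

noncomputable def coronaClique (e : G.edgeSet) :
    (⊤ : SimpleGraph (Bool ⊕ Fin q)) ↪g edgeCorona G q where
  toFun := Sum.elim (Sum.inl ∘ edgeEnd e) fun i => Sum.inr (e, i)
  inj' := by
    rintro (t | i) (s | j) h <;> simp_all [(edgeEnd_injective e).eq_iff]
  map_rel_iff' := by
    rintro (t | i) (s | j)
    · exact (adj_edgeEnd_iff e).trans (by simp)
    · exact iff_of_true (mem_edge_iff_exists_edgeEnd.mpr ⟨t, rfl⟩) Sum.inl_ne_inr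
    · exact iff_of_true (mem_edge_iff_exists_edgeEnd.mpr ⟨s, rfl⟩) Sum.inr_ne_inl
    · exact (and_iff_right rfl).trans (by simp)

def coronaBase : G ↪g edgeCorona G q where
  toFun := Sum.inl
  inj' := Sum.inl_injective
  map_rel_iff' := Iff.rfl

@[simp] theorem coronaClique_inl (e : G.edgeSet) (t : Bool) :
    coronaClique (q := q) e (Sum.inl t) = Sum.inl (edgeEnd e t) := rfl

@[simp] theorem coronaClique_inr (e : G.edgeSet) (i : Fin q) :
    coronaClique e (Sum.inr i) = Sum.inr (e, i) := rfl

theorem exists_coronaClique_of_adj {x y : V ⊕ (G.edgeSet × Fin q)}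
    (h : (edgeCorona G q).Adj x y) :
    ∃ e a b, coronaClique e a = x ∧ coronaClique e b = y := by
  rcases x with u | ⟨e, i⟩ <;> rcases y with v | ⟨e', j⟩
  · let e : G.edgeSet := ⟨s(u, v), h⟩
    obtain ⟨t, ht⟩ := (mem_edge_iff_exists_edgeEnd (e := e)).mp (Sym2.mem_mk_left u v)
    obtain ⟨s, hs⟩ := (mem_edge_iff_exists_edgeEnd (e := e)).mp (Sym2.mem_mk_right u v)
    exact ⟨e, .inl t, .inl s, congrArg Sum.inl ht, congrArg Sum.inl hs⟩
  · obtain ⟨t, rfl⟩ := mem_edge_iff_exists_edgeEnd.mp h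
    exact ⟨e', .inl t, .inr j, rfl, rfl⟩
  · obtain ⟨t, rfl⟩ := mem_edge_iff_exists_edgeEnd.mp h
    exact ⟨e, .inr i, .inl t, rfl, rfl⟩
  · obtain ⟨rfl, -⟩ := h
    exact ⟨e, .inr i, .inr j, rfl, rfl⟩

theorem coronaClique_inr_eq {e e' : G.edgeSet} {i : Fin q} {a : Bool ⊕ Fin q}
    (h : coronaClique e (Sum.inr i) = coronaClique e' a) : e' = e ∧ a = Sum.inr i := by
  rcases a with t | j <;> simp_all [eq_comm]

theorem coronaClique_eq_inl {e : G.edgeSet} {a : Bool ⊕ Fin q} {u : V}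
    (h : coronaClique e a = Sum.inl u) : ∃ t, a = Sum.inl t ∧ edgeEnd e t = u := by
  rcases a with t | i <;> simp_all

theorem eq_of_coronaClique_eq {e e' : G.edgeSet} {a b a' b' : Bool ⊕ Fin q} (hab : a ≠ b)
    (ha : coronaClique e a = coronaClique e' a') (hb : coronaClique e b = coronaClique e' b') :
    e = e' := by
  rcases a with t | i
  · rcases b with s | j
    · rcases a' with t' | _ <;> rcases b' with s' | _ <;>
        simp only [coronaClique_inl, coronaClique_inr, Sum.inl.injEq, reduceCtorEq] at ha hb
      have hts : t ≠ s := by simpa using hab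
      have hts' : t' ≠ s' := by
        rintro rfl
        exact hts (edgeEnd_injective e (ha.trans hb.symm))
      apply Subtype.ext
      rw [← mk_edgeEnd_of_ne e hts, ← mk_edgeEnd_of_ne e' hts', ha, hb]
    · exact (coronaClique_inr_eq hb).1.symm
  · exact (coronaClique_inr_eq ha).1.symm

theorem card_edgeSet_top (W : Type) [Fintype W] :
    Nat.card (⊤ : SimpleGraph W).edgeSet = (Fintype.card W).choose 2 := by
  classical
  rw [Nat.card_eq_fintype_card, ← SimpleGraph.edgeFinset_card,
    SimpleGraph.card_edgeFinset_top_eq_card_choose_two]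

theorem injective_coronaClique_mapEdgeSet :
    Function.Injective fun p : G.edgeSet × (⊤ : SimpleGraph (Bool ⊕ Fin q)).edgeSet =>
      (coronaClique p.1).mapEdgeSet p.2 := by
  rintro ⟨e, s, hs⟩ ⟨e', s', hs'⟩ h
  obtain rfl : e = e' := by
    induction s using Sym2.ind with | _ a b => ?_
    induction s' using Sym2.ind with | _ a' b' => ?_
    have hab : a ≠ b := hs
    have h' := congrArg Subtype.val h
    simp only [SimpleGraph.Embedding.mapEdgeSet_apply, SimpleGraph.Hom.mapEdgeSet_coe,
      Sym2.map_mk, Sym2.eq_iff] at h'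
    rcases h' with ⟨ha, hb⟩ | ⟨ha, hb⟩
    exacts [eq_of_coronaClique_eq hab ha hb, eq_of_coronaClique_eq hab ha hb]
  exact Prod.ext rfl ((coronaClique e).mapEdgeSet.injective h)

theorem surjective_coronaClique_mapEdgeSet :
    Function.Surjective fun p : G.edgeSet × (⊤ : SimpleGraph (Bool ⊕ Fin q)).edgeSet =>
      (coronaClique p.1).mapEdgeSet p.2 := by
  rintro ⟨s, hs⟩
  induction s using Sym2.ind with | _ x y => ?_
  obtain ⟨e, a, b, rfl, rfl⟩ := exists_coronaClique_of_adj hs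
  have hab : (edgeCorona G q).Adj (coronaClique e a) (coronaClique e b) := hs
  exact ⟨(e, ⟨s(a, b), (coronaClique e).map_adj_iff.mp hab⟩),
    Subtype.ext (Sym2.map_mk _ _ _)⟩

theorem card_edgeSet_edgeCorona :
    Nat.card (edgeCorona G q).edgeSet = Nat.card G.edgeSet * (q + 2).choose 2 := by
  rw [← Nat.card_congr (Equiv.ofBijective _
      ⟨injective_coronaClique_mapEdgeSet, surjective_coronaClique_mapEdgeSet⟩),
    Nat.card_prod, card_edgeSet_top]
  simp [add_comm]

end EdgeCorona

namespace AcyclicOrientation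

variable {V : Type} {G : SimpleGraph V} {q : ℕ}

def IsCompatible (D : AcyclicOrientation G) (e : G.edgeSet)
    (C : AcyclicOrientation (⊤ : SimpleGraph (Bool ⊕ Fin q))) : Prop :=
  C.dir (.inl false) (.inl true) ↔ D.dir (edgeEnd e false) (edgeEnd e true)

theorem IsCompatible.dir_inl_iff {D : AcyclicOrientation G} {e : G.edgeSet}
    {C : AcyclicOrientation (⊤ : SimpleGraph (Bool ⊕ Fin q))} (h : IsCompatible D e C)
    (t s : Bool) :
    C.dir (.inl t) (.inl s) ↔ D.dir (edgeEnd e t) (edgeEnd e s) := by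
  have hC : (⊤ : SimpleGraph (Bool ⊕ Fin q)).Adj (.inl false) (.inl true) := by simp
  have hD : G.Adj (edgeEnd e false) (edgeEnd e true) := (adj_edgeEnd_iff e).mpr Bool.false_ne_true
  cases t <;> cases s
  · exact iff_of_false (C.ne_of_dir · rfl) (D.ne_of_dir · rfl)
  · exact h
  · exact (C.not_dir_iff hC).symm.trans (h.not.trans (D.not_dir_iff hD))
  · exact iff_of_false (C.ne_of_dir · rfl) (D.ne_of_dir · rfl)

theorem card_isCompatible (D : AcyclicOrientation G) (e : G.edgeSet) :
    Nat.card {C : AcyclicOrientation (⊤ : SimpleGraph (Bool ⊕ Fin q)) // IsCompatible D e C} =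
      (q + 2).factorial / 2 := by
  refine (card_subtype_dir_iff (by simp) _).trans ?_
  rw [card_top]
  simp [add_comm]

variable (F : G.edgeSet → AcyclicOrientation (⊤ : SimpleGraph (Bool ⊕ Fin q)))

def cliqueUnionDir (x y : V ⊕ (G.edgeSet × Fin q)) : Prop :=
  ∃ e a b, coronaClique e a = x ∧ coronaClique e b = y ∧ (F e).dir a b

theorem cliqueUnionDir_coronaClique {e : G.edgeSet} {a b : Bool ⊕ Fin q} :
    cliqueUnionDir F (coronaClique e a) (coronaClique e b) ↔ (F e).dir a b := by
  refine ⟨fun ⟨e', a', b', ha, hb, h⟩ => ?_, fun h => ⟨e, a, b, rfl, rfl, h⟩⟩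
  obtain rfl := eq_of_coronaClique_eq ((F e').ne_of_dir h) ha hb
  rwa [(coronaClique e').injective ha, (coronaClique e').injective hb] at h

theorem cliqueUnionDir_inr {e : G.edgeSet} {i : Fin q} {z : V ⊕ (G.edgeSet × Fin q)}
    (h : cliqueUnionDir F (.inr (e, i)) z) :
    ∃ b, coronaClique e b = z ∧ (F e).dir (.inr i) b := by
  obtain ⟨e', a', b', ha', rfl, h⟩ := h
  obtain ⟨rfl, rfl⟩ := coronaClique_inr_eq ha'.symm
  exact ⟨b', rfl, h⟩

variable {D : AcyclicOrientation G} {F}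

theorem cliqueUnionDir_inl_inl (hF : ∀ e, IsCompatible D e (F e)) {u v : V} :
    cliqueUnionDir F (.inl u) (.inl v) ↔ D.dir u v := by
  constructor
  · rintro ⟨e, a, b, ha, hb, h⟩
    obtain ⟨t, rfl, rfl⟩ := coronaClique_eq_inl ha
    obtain ⟨s, rfl, rfl⟩ := coronaClique_eq_inl hb
    exact ((hF e).dir_inl_iff t s).mp h
  · intro h
    have hadj := (coronaBase (q := q)).map_adj_iff.mpr (D.dir_adj u v h)
    obtain ⟨e, a, b, ha, hb⟩ := exists_coronaClique_of_adj hadj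
    obtain ⟨t, rfl, rfl⟩ := coronaClique_eq_inl ha
    obtain ⟨s, rfl, rfl⟩ := coronaClique_eq_inl hb
    exact ⟨e, _, _, rfl, rfl, ((hF e).dir_inl_iff t s).mpr h⟩

theorem exists_of_transGen_cliqueUnionDir_inl (hF : ∀ e, IsCompatible D e (F e)) {u : V}
    {z : V ⊕ (G.edgeSet × Fin q)} (h : TransGen (cliqueUnionDir F) (.inl u) z) :
    ∃ e b t, coronaClique e b = z ∧ ReflTransGen D.dir u (edgeEnd e t) ∧
      (F e).dir (.inl t) b := by
  have base {w z} (hw : ReflTransGen D.dir u w) (hwz : cliqueUnionDir F (.inl w) z) :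
      ∃ e b t, coronaClique e b = z ∧ ReflTransGen D.dir u (edgeEnd e t) ∧
        (F e).dir (.inl t) b := by
    obtain ⟨e, a, b, ha, rfl, hab⟩ := hwz
    obtain ⟨t, rfl, rfl⟩ := coronaClique_eq_inl ha
    exact ⟨e, b, t, rfl, hw, hab⟩
  induction h with
  | single h => exact base .refl h
  | tail _ hyz ih =>
    obtain ⟨e, b, t, rfl, hut, htb⟩ := ih
    rcases b with s | i
    · exact base (hut.tail (((hF e).dir_inl_iff t s).mp htb)) hyz
    · obtain ⟨b', rfl, hib'⟩ := cliqueUnionDir_inr F hyz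
      exact ⟨e, b', t, rfl, hut, top_dir_trans _ htb hib'⟩

theorem not_transGen_cliqueUnionDir_inl (hF : ∀ e, IsCompatible D e (F e)) (u : V) :
    ¬ TransGen (cliqueUnionDir F) (.inl u) (.inl u) := fun h => by
  obtain ⟨e, b, t, hb, hut, htb⟩ := exists_of_transGen_cliqueUnionDir_inl hF h
  obtain ⟨s, rfl, rfl⟩ := coronaClique_eq_inl hb
  exact D.acyclic _ (TransGen.tail' hut (((hF e).dir_inl_iff t s).mp htb))

theorem transGen_cliqueUnionDir_inr {e : G.edgeSet} {i : Fin q} {z : V ⊕ (G.edgeSet × Fin q)}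
    (h : TransGen (cliqueUnionDir F) (.inr (e, i)) z) :
    (∃ b, coronaClique e b = z ∧ (F e).dir (.inr i) b) ∨
      ∃ w, TransGen (cliqueUnionDir F) (.inr (e, i)) (.inl w) ∧
        ReflTransGen (cliqueUnionDir F) (.inl w) z := by
  induction h with
  | single h => exact .inl (cliqueUnionDir_inr F h)
  | tail hxy hyz ih =>
    rcases ih with ⟨_ | j, rfl, hib⟩ | ⟨w, hxw, hwy⟩
    · exact .inr ⟨_, hxy, .single hyz⟩
    · obtain ⟨b', rfl, hjb'⟩ := cliqueUnionDir_inr F hyz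
      exact .inl ⟨b', rfl, top_dir_trans _ hib hjb'⟩
    · exact .inr ⟨w, hxw, hwy.tail hyz⟩

def glue (hF : ∀ e, IsCompatible D e (F e)) : AcyclicOrientation (edgeCorona G q) where
  dir := cliqueUnionDir F
  dir_adj := by
    rintro _ _ ⟨e, a, b, rfl, rfl, h⟩
    exact (coronaClique e).map_adj_iff.mpr ((F e).dir_adj a b h)
  adj_dir x y h := by
    obtain ⟨e, a, b, rfl, rfl⟩ := exists_coronaClique_of_adj h
    exact ((F e).adj_dir a b ((coronaClique e).map_adj_iff.mp h)).imp
      (⟨e, a, b, rfl, rfl, ·⟩) (⟨e, b, a, rfl, rfl, ·⟩)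
  asymm := by
    rintro _ _ ⟨e, a, b, rfl, rfl, h⟩ h'
    exact (F e).asymm a b h ((cliqueUnionDir_coronaClique F).mp h')
  acyclic := by
    rintro (u | ⟨e, i⟩) h
    · exact not_transGen_cliqueUnionDir_inl hF u h
    · rcases transGen_cliqueUnionDir_inr h with ⟨b, hb, hib⟩ | ⟨w, hxw, hwx⟩
      · obtain rfl := (coronaClique e).injective (hb.trans (coronaClique_inr e i).symm)
        exact (F e).ne_of_dir hib rfl
      · exact not_transGen_cliqueUnionDir_inl hF w (TransGen.trans_right hwx hxw)

theorem comap_coronaClique_glue (hF : ∀ e, IsCompatible D e (F e)) (e : G.edgeSet) :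
    (glue hF).comap (coronaClique e) = F e :=
  ext fun _ _ => cliqueUnionDir_coronaClique F

theorem comap_coronaBase_glue (hF : ∀ e, IsCompatible D e (F e)) :
    (glue hF).comap coronaBase = D :=
  ext fun _ _ => cliqueUnionDir_inl_inl hF

theorem glue_comap (D' : AcyclicOrientation (edgeCorona G q)) :
    glue (D := D'.comap coronaBase) (F := fun e => D'.comap (coronaClique e)) (fun _ => Iff.rfl) =
      D' := by
  refine ext fun x y => ⟨fun ⟨e, a, b, ha, hb, h⟩ => ha ▸ hb ▸ h, fun h => ?_⟩
  obtain ⟨e, a, b, rfl, rfl⟩ := exists_coronaClique_of_adj (D'.dir_adj x y h)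
  exact ⟨e, a, b, rfl, rfl, h⟩

noncomputable def coronaEquiv : AcyclicOrientation (edgeCorona G q) ≃
    {p : AcyclicOrientation G ×
        (G.edgeSet → AcyclicOrientation (⊤ : SimpleGraph (Bool ⊕ Fin q))) //
      ∀ e, IsCompatible p.1 e (p.2 e)} where
  toFun D' := ⟨(D'.comap coronaBase, fun e => D'.comap (coronaClique e)), fun _ => Iff.rfl⟩
  invFun p := glue p.2
  left_inv := glue_comap
  right_inv p := Subtype.ext <| Prod.ext (comap_coronaBase_glue p.2)
    (funext (comap_coronaClique_glue p.2))

theorem card_edgeCorona [Finite V] :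
    Nat.card (AcyclicOrientation (edgeCorona G q)) =
      Nat.card (AcyclicOrientation G) * ((q + 2).factorial / 2) ^ Nat.card G.edgeSet := by
  have := Fintype.ofFinite G.edgeSet
  have := Fintype.ofFinite (AcyclicOrientation G)
  rw [Nat.card_congr (coronaEquiv.trans (Equiv.subtypeProdEquivSigmaSubtype
    fun (D : AcyclicOrientation G)
      (F : G.edgeSet → AcyclicOrientation (⊤ : SimpleGraph (Bool ⊕ Fin q))) =>
        ∀ e, IsCompatible D e (F e))), Nat.card_sigma,
    Finset.sum_congr rfl fun D _ => (Nat.card_congr Equiv.subtypePiEquivPi).trans Nat.card_pi]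
  simp only [card_isCompatible, Finset.prod_const, Finset.sum_const, Finset.card_univ, smul_eq_mul,
    Nat.card_eq_fintype_card]

end AcyclicOrientation

instance (q g : ℕ) : Finite (GVert q g) := by
  induction g with
  | zero => exact inferInstanceAs (Finite (Fin (q + 2)))
  | succ g ih => exact inferInstanceAs (Finite (GVert q g ⊕ ((Gnet q g).edgeSet × Fin q)))

theorem card_edgeSet_Gnet (q g : ℕ) :
    Nat.card (Gnet q g).edgeSet = (q + 2).choose 2 ^ (g + 1) := by
  induction g with
  | zero => exact (card_edgeSet_top (Fin (q + 2))).trans (by simp)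
  | succ g ih => rw [pow_succ, ← ih]; exact card_edgeSet_edgeCorona

theorem two_mul_choose_two (n : ℕ) : 2 * n.choose 2 = n * (n - 1) := by
  rw [Nat.choose_two_right, Nat.mul_div_cancel' (Nat.even_mul_pred_self n).two_dvd]

theorem expE_eq_sum {q : ℕ} (hq : 1 ≤ q) (g : ℕ) :
    expE q g = ∑ k ∈ Finset.range (g + 1), (q + 2).choose 2 ^ k := by
  have h2 : 2 * (q + 2).choose 2 = (q + 2) * (q + 1) := two_mul_choose_two (q + 2)
  have hM : (q + 1) * (q + 2) / 2 = (q + 2).choose 2 := by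
    rw [mul_comm, ← h2, Nat.mul_div_cancel_left _ two_pos]
  have hD : q * (q + 3) = 2 * ((q + 2).choose 2 - 1) := by
    rw [Nat.mul_sub, h2]; exact (Nat.sub_eq_of_eq_add (by ring)).symm
  rw [expE, hM, hD, Nat.mul_div_mul_left _ _ two_pos, Nat.geomSum_eq (by nlinarith)]

/-- For all `g ≥ 0`, `q ≥ 1`, the number of acyclic orientations of `G_q(g)` is
`2 · ((q+2)!/2)^{E(g,q)}`. -/
theorem card_acyclicOrientations (q g : ℕ) (hq : 1 ≤ q) :
    Nat.card (AcyclicOrientation (Gnet q g)) =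
      2 * (Nat.factorial (q + 2) / 2) ^ expE q g := by
  rw [expE_eq_sum hq]
  induction g with
  | zero =>
    have h2 : 2 ∣ (q + 2).factorial := Nat.dvd_factorial two_pos (by omega)
    show Nat.card (AcyclicOrientation (⊤ : SimpleGraph (Fin (q + 2)))) = _
    rw [AcyclicOrientation.card_top, Fintype.card_fin]
    simp [Nat.mul_div_cancel' h2]
  | succ g ih =>
    show Nat.card (AcyclicOrientation (edgeCorona (Gnet q g) q)) = _
    rw [AcyclicOrientation.card_edgeCorona, ih, card_edgeSet_Gnet,
      Finset.sum_range_succ _ (g + 1), pow_add ((q + 2).factorial / 2), mul_assoc]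
end
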